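/- arXiv:1105.2136 — 2 statements merged into one kernel-verified Lean document; each statement's English description precedes it below -/
import Mathlib

section
/- For any integer a ≥ 1 and any points p_1,...,p_{2a+1} of P^1×P^1×P^1, the linear system L_{(1,1,2a)}(2^{2a+1}) is nonempty: there exist nonzero forms D_1 of multidegree (1,0,a) and D_2 of multidegree (0,1,a), each vanishing at all the p_i, and the product D_1·D_2 is a multidegree (1,1,2a) form singular at every p_i. In particular the system is special, since its virtual dimension equals -1. -/
/-!
The monomials `x_{0,e} · x_{2,0}^k x_{2,1}^(a-k)` (`e ≤ 1`, `k ≤ a`) are `2(a+1)` linearly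
independent forms of multidegree `(1,0,a)`, so evaluation at `2a+1` points has a nonzero
kernel on their span; likewise for `(0,1,a)`. A product of two forms vanishing at a point is
singular there by the Leibniz rule.
-/

open MvPolynomial

/-- Multihomogeneous forms of multidegree `d` on `(ℙ¹)^r`. -/
noncomputable def mSpace (r : ℕ) (d : Fin r → ℕ) :
    Submodule ℂ (MvPolynomial (Fin r × Fin 2) ℂ) where
  carrier := {p | ∀ m ∈ p.support, ∀ i, m (i, 0) + m (i, 1) = d i}
  add_mem' := by
    intro a b ha hb m hm i
    rcases Finset.mem_union.mp (MvPolynomial.support_add hm) with h | h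
    · exact ha m h i
    · exact hb m h i
  zero_mem' := by simp
  smul_mem' := by
    intro c p hp m hm i
    exact hp m (MvPolynomial.support_smul hm) i

/-- A form is singular at a point if it vanishes there together with all its
first partial derivatives. -/
def Singular {σ : Type} (F : MvPolynomial σ ℂ) (p : σ → ℂ) : Prop :=
  MvPolynomial.eval p F = 0 ∧ ∀ v, MvPolynomial.eval p (MvPolynomial.pderiv v F) = 0

open Module

section Interpolation

variable {σ K : Type*} [Field K]

theorem exists_ne_zero_mem_eval_eq_zero {n : ℕ} (V : Submodule K (MvPolynomial σ K))
    [FiniteDimensional K V] (hV : n < finrank K V) (pts : Fin n → σ → K) :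
    ∃ F ∈ V, F ≠ 0 ∧ ∀ j, eval (pts j) F = 0 := by
  let evalAt : V →ₗ[K] Fin n → K :=
    LinearMap.pi fun j => (aeval (pts j)).toLinearMap ∘ₗ V.subtype
  obtain ⟨⟨F, hFV⟩, hF, hF0⟩ := Submodule.exists_mem_ne_zero_of_ne_bot
    (LinearMap.ker_ne_bot_of_finrank_lt (f := evalAt) (by simpa using hV))
  refine ⟨F, hFV, by simpa using hF0, fun j => ?_⟩
  simpa [evalAt] using congrFun (LinearMap.mem_ker.mp hF) j

theorem finrank_span_monomial {ι : Type*} [Fintype ι] {m : ι → σ →₀ ℕ}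
    (hm : Function.Injective m) :
    finrank K (Submodule.span K (Set.range fun i => monomial (m i) (1 : K))) =
      Fintype.card ι :=
  finrank_span_eq_card ((basisMonomials σ K).linearIndependent.comp m hm)

end Interpolation

section Multidegree

variable {r : ℕ}

theorem monomial_mem_mSpace {d : Fin r → ℕ} {s : Fin r × Fin 2 →₀ ℕ}
    (hs : ∀ i, s (i, 0) + s (i, 1) = d i) (c : ℂ) : monomial s c ∈ mSpace r d := by
  intro t ht i
  rw [Finset.mem_singleton.mp (support_monomial_subset ht)]
  exact hs i

theorem mul_mem_mSpace {d d' : Fin r → ℕ} {F G : MvPolynomial (Fin r × Fin 2) ℂ}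
    (hF : F ∈ mSpace r d) (hG : G ∈ mSpace r d') : F * G ∈ mSpace r (d + d') := by
  intro s hs i
  obtain ⟨s₁, hs₁, s₂, hs₂, rfl⟩ := Finset.mem_add.mp (support_mul F G hs)
  simp only [Finsupp.add_apply, Pi.add_apply]
  have := hF s₁ hs₁ i
  have := hG s₂ hs₂ i
  omega

noncomputable def factorMonomial (i : Fin r) (A k : ℕ) : Fin r × Fin 2 →₀ ℕ :=
  Finsupp.single (i, 0) k + Finsupp.single (i, 1) (A - k)

theorem factorMonomial_apply_of_ne {i l : Fin r} (h : l ≠ i) (A k : ℕ) (e : Fin 2) :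
    factorMonomial i A k (l, e) = 0 := by
  simp [factorMonomial, h.symm]

theorem factorMonomial_apply_self_zero (i : Fin r) (A k : ℕ) :
    factorMonomial i A k (i, 0) = k := by
  simp [factorMonomial]

theorem factorMonomial_apply_self_one (i : Fin r) (A k : ℕ) :
    factorMonomial i A k (i, 1) = A - k := by
  simp [factorMonomial]

theorem factorMonomial_degree (i : Fin r) {A k : ℕ} (hk : k ≤ A) (l : Fin r) :
    factorMonomial i A k (l, 0) + factorMonomial i A k (l, 1) =
      (Pi.single i A : Fin r → ℕ) l := by
  by_cases h : l = i
  · rw [h, factorMonomial_apply_self_zero, factorMonomial_apply_self_one, Pi.single_eq_same]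
    omega
  · simp [factorMonomial_apply_of_ne h, h]

noncomputable def bidegreeMonomial (i j : Fin r) (A : ℕ) (ek : Fin 2 × Fin (A + 1)) :
    Fin r × Fin 2 →₀ ℕ :=
  factorMonomial i 1 ek.1 + factorMonomial j A ek.2

theorem bidegreeMonomial_injective {i j : Fin r} (hij : i ≠ j) (A : ℕ) :
    Function.Injective (bidegreeMonomial i j A) := by
  rintro ⟨e, k⟩ ⟨e', k'⟩ h
  have he := DFunLike.congr_fun h (i, 0)
  have hk := DFunLike.congr_fun h (j, 0)
  simp only [bidegreeMonomial, Finsupp.add_apply, factorMonomial_apply_self_zero,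
    factorMonomial_apply_of_ne hij, factorMonomial_apply_of_ne hij.symm, add_zero,
    zero_add] at he hk
  exact Prod.ext (Fin.ext he) (Fin.ext hk)

theorem bidegreeMonomial_degree (i j : Fin r) (A : ℕ) (ek : Fin 2 × Fin (A + 1)) (l : Fin r) :
    bidegreeMonomial i j A ek (l, 0) + bidegreeMonomial i j A ek (l, 1) =
      (Pi.single i 1 + Pi.single j A : Fin r → ℕ) l := by
  have h₁ := factorMonomial_degree i (A := 1) (k := ek.1) (by omega) l
  have h₂ := factorMonomial_degree j (A := A) (k := ek.2) (by omega) l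
  simp only [bidegreeMonomial, Finsupp.add_apply, Pi.add_apply]
  omega

theorem exists_ne_zero_mem_mSpace_eval_eq_zero {i j : Fin r} (hij : i ≠ j) (A : ℕ) {n : ℕ}
    (hn : n < 2 * (A + 1)) (pts : Fin n → Fin r × Fin 2 → ℂ) :
    ∃ F ∈ mSpace r (Pi.single i 1 + Pi.single j A), F ≠ 0 ∧ ∀ l, eval (pts l) F = 0 := by
  let V := Submodule.span ℂ (Set.range fun ek => monomial (bidegreeMonomial i j A ek) (1 : ℂ))
  have : FiniteDimensional ℂ V := .span_of_finite ℂ (Set.finite_range _)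
  obtain ⟨F, hF, hF0, hFpts⟩ := exists_ne_zero_mem_eval_eq_zero V
    (by simpa [V, finrank_span_monomial (bidegreeMonomial_injective hij A), mul_comm] using hn)
    pts
  refine ⟨F, Submodule.span_le.mpr ?_ hF, hF0, hFpts⟩
  rintro _ ⟨ek, rfl⟩
  exact monomial_mem_mSpace (bidegreeMonomial_degree i j A ek) 1

end Multidegree

theorem singular_mul_of_eval_eq_zero {σ : Type} {F G : MvPolynomial σ ℂ} {p : σ → ℂ}
    (hF : eval p F = 0) (hG : eval p G = 0) : Singular (F * G) p :=
  ⟨by simp [hF], fun v => by simp [hF, hG]⟩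

theorem special_system_one_one_twoA_general (a : ℕ)
    (p : Fin (2 * a + 1) → Fin 3 × Fin 2 → ℂ) :
    (∃ D₁ ∈ mSpace 3 ![1, 0, a], ∃ D₂ ∈ mSpace 3 ![0, 1, a],
      D₁ ≠ 0 ∧ D₂ ≠ 0 ∧
      (∀ j, MvPolynomial.eval (p j) D₁ = 0) ∧ (∀ j, MvPolynomial.eval (p j) D₂ = 0) ∧
      D₁ * D₂ ∈ mSpace 3 ![1, 1, 2 * a] ∧ ∀ j, Singular (D₁ * D₂) (p j)) ∧
    (2 : ℤ) * 2 * (2 * (a : ℤ) + 1) - 1 - 4 * (2 * (a : ℤ) + 1) = -1 := by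
  have hdeg₁ : Pi.single 0 1 + Pi.single 2 a = ![1, 0, a] := by
    ext l; fin_cases l <;> simp
  have hdeg₂ : Pi.single 1 1 + Pi.single 2 a = ![0, 1, a] := by
    ext l; fin_cases l <;> simp
  have hdeg : ![1, 0, a] + ![0, 1, a] = ![1, 1, 2 * a] := by
    ext l; fin_cases l <;> simp [two_mul]
  obtain ⟨D₁, hD₁, hD₁0, hD₁p⟩ :=
    exists_ne_zero_mem_mSpace_eval_eq_zero (i := 0) (j := 2) (by decide) a (by omega) p
  obtain ⟨D₂, hD₂, hD₂0, hD₂p⟩ :=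
    exists_ne_zero_mem_mSpace_eval_eq_zero (i := 1) (j := 2) (by decide) a (by omega) p
  rw [hdeg₁] at hD₁
  rw [hdeg₂] at hD₂
  refine ⟨⟨D₁, hD₁, D₂, hD₂, hD₁0, hD₂0, hD₁p, hD₂p, hdeg ▸ mul_mem_mSpace hD₁ hD₂,
    fun j => singular_mul_of_eval_eq_zero (hD₁p j) (hD₂p j)⟩, by ring⟩

/-- for `a ≥ 1` and any points `p_1,…,p_{2a+1}` of `(ℙ¹)³`, the system
`L_{(1,1,2a)}(2^{2a+1})` is nonempty: there are nonzero forms `D₁` of multidegree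
`(1,0,a)` and `D₂` of multidegree `(0,1,a)`, each vanishing at all the points, and
`D₁·D₂` is a multidegree `(1,1,2a)` form singular at every point. In particular the
system is special, since its virtual dimension equals `-1`. -/
theorem special_system_one_one_twoA (a : ℕ) (ha : 1 ≤ a)
    (p : Fin (2 * a + 1) → Fin 3 × Fin 2 → ℂ)
    (hp : ∀ j i, p j (i, 0) ≠ 0 ∨ p j (i, 1) ≠ 0) :
    (∃ D₁ ∈ mSpace 3 ![1, 0, a], ∃ D₂ ∈ mSpace 3 ![0, 1, a],
      D₁ ≠ 0 ∧ D₂ ≠ 0 ∧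
      (∀ j, MvPolynomial.eval (p j) D₁ = 0) ∧ (∀ j, MvPolynomial.eval (p j) D₂ = 0) ∧
      D₁ * D₂ ∈ mSpace 3 ![1, 1, 2 * a] ∧ ∀ j, Singular (D₁ * D₂) (p j)) ∧
    (2 : ℤ) * 2 * (2 * (a : ℤ) + 1) - 1 - 4 * (2 * (a : ℤ) + 1) = -1 :=
  special_system_one_one_twoA_general a p
end

section
/- Let p_1 = ([1:0],[1:0],[1:0],[1:0]), p_2 = ([0:1],[0:1],[0:1],[0:1]), p_3 = ([1:1],[1:1],[1:1],[1:1]) in (P^1)^4. The vector space of multidegree (1,1,1,1) forms on (P^1)^4 that are singular at p_1, p_2, p_3 is exactly the 2-dimensional space spanned by (x_0y_1 - x_1y_0)(z_0w_1 - z_1w_0) and (x_0z_1 - x_1z_0)(y_0w_1 - y_1w_0). -/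
open MvPolynomial

/-- `(x₀y₁ - x₁y₀)(z₀w₁ - z₁w₀)`, with factors `x,y,z,w` indexed by `0,1,2,3`. -/
noncomputable def F₁ : MvPolynomial (Fin 4 × Fin 2) ℂ :=
  (X (0, 0) * X (1, 1) - X (0, 1) * X (1, 0)) * (X (2, 0) * X (3, 1) - X (2, 1) * X (3, 0))

/-- `(x₀z₁ - x₁z₀)(y₀w₁ - y₁w₀)`. -/
noncomputable def F₂ : MvPolynomial (Fin 4 × Fin 2) ℂ :=
  (X (0, 0) * X (2, 1) - X (0, 1) * X (2, 0)) * (X (1, 0) * X (3, 1) - X (1, 1) * X (3, 0))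

/-- The three points `([1:0],[1:0],[1:0],[1:0])`, `([0:1],[0:1],[0:1],[0:1])`,
`([1:1],[1:1],[1:1],[1:1])` of `(ℙ¹)⁴`, given by coordinate vectors. -/
noncomputable def P : Fin 3 → Fin 4 × Fin 2 → ℂ :=
  ![fun v => if v.2 = 0 then 1 else 0, fun v => if v.2 = 0 then 0 else 1, fun _ => 1]

/-!
Write a `(1,1,1,1)`-form as `F = ∑_q c_q x_{0,q 0} x_{1,q 1} x_{2,q 2} x_{3,q 3}` with
`q : Fin 4 → Fin 2`. At `p₁ = ([1:0])⁴` the partial derivatives of `F` are exactly the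
coefficients `c_q` with at most one `q i = 1`, at `p₂ = ([0:1])⁴` those with at most one
`q i = 0`, and at `p₃ = ([1:1])⁴` they are the slice sums `∑_{q i = j} c_q`. So only the six
coefficients with two ones survive, and the slice sums leave a two-dimensional space of them,
pinned down by `c_{1010}` and `c_{1100}`. Conversely `F₁` and `F₂` are products of two `2 × 2`
minors, each vanishing at all three points because the four factors of each point coincide, so
they are singular there; their coefficients at `1010` and `1100` show they are independent.
-/

open Finset

section Singular

variable {σ : Type}

def singularSubmodule (p : σ → ℂ) : Submodule ℂ (MvPolynomial σ ℂ) where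
  carrier := {F | Singular F p}
  add_mem' {F G} hF hG :=
    ⟨by simp [hF.1, hG.1], fun v => by simp [hF.2 v, hG.2 v]⟩
  zero_mem' := ⟨by simp, fun v => by simp⟩
  smul_mem' c F hF :=
    ⟨by simp [smul_eval, hF.1], fun v => by simp [smul_eval, hF.2 v]⟩

@[simp]
lemma mem_singularSubmodule {F : MvPolynomial σ ℂ} {p : σ → ℂ} :
    F ∈ singularSubmodule p ↔ Singular F p :=
  Iff.rfl

lemma singular_mul {f g : MvPolynomial σ ℂ} {p : σ → ℂ} (hf : eval p f = 0)
    (hg : eval p g = 0) : Singular (f * g) p :=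
  ⟨by simp [hf], fun v => by simp [hf, hg]⟩

end Singular

section Multilinear

variable {r : ℕ}

/-- The exponent of `x_{0, q 0} ⋯ x_{r-1, q (r-1)}`: `q i` picks the coordinate of the `i`-th
factor `ℙ¹`. -/
noncomputable def multilinExp (q : Fin r → Fin 2) : Fin r × Fin 2 →₀ ℕ :=
  ∑ i, Finsupp.single (i, q i) 1

lemma multilinExp_apply (q : Fin r → Fin 2) (i : Fin r) (j : Fin 2) :
    multilinExp q (i, j) = if q i = j then 1 else 0 := by
  rw [multilinExp, Finsupp.finsetSum_apply, Finset.sum_eq_single i]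
  · simp [Finsupp.single_apply]
  · intro k _ hk
    simp [hk]
  · simp

lemma multilinExp_injective : Function.Injective (multilinExp (r := r)) := by
  intro q q' h
  funext i
  simpa [multilinExp_apply, eq_comm] using DFunLike.congr_fun h (i, q i)

lemma monomial_multilinExp (q : Fin r → Fin 2) :
    monomial (multilinExp q) (1 : ℂ) = ∏ i, X (i, q i) := by
  simp only [multilinExp, monomial_sum_one]
  rfl

lemma monomial_multilinExp_mem_mSpace (q : Fin r → Fin 2) :
    monomial (multilinExp q) (1 : ℂ) ∈ mSpace r 1 := by
  intro m hm i
  rw [support_monomial, if_neg one_ne_zero, Finset.mem_singleton] at hm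
  subst hm
  rw [multilinExp_apply, multilinExp_apply, Pi.one_apply]
  generalize q i = c
  fin_cases c <;> rfl

lemma exists_multilinExp_eq {m : Fin r × Fin 2 →₀ ℕ} (hm : ∀ i, m (i, 0) + m (i, 1) = 1) :
    ∃ q, multilinExp q = m := by
  refine ⟨fun i => if m (i, 0) = 1 then 0 else 1, ?_⟩
  ext ⟨i, j⟩
  have := hm i
  rw [multilinExp_apply]
  fin_cases j <;> by_cases h : m (i, 0) = 1 <;> simp [h] <;> omega

lemma sum_coeff_multilinExp_smul {F : MvPolynomial (Fin r × Fin 2) ℂ} (hF : F ∈ mSpace r 1) :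
    ∑ q, coeff (multilinExp q) F • monomial (multilinExp q) 1 = F := by
  ext m
  simp only [coeff_sum, coeff_smul, coeff_monomial, smul_eq_mul, mul_ite, mul_one, mul_zero]
  by_cases hm : ∃ q, multilinExp q = m
  · obtain ⟨q₀, rfl⟩ := hm
    rw [Finset.sum_eq_single q₀ (fun q _ hq => if_neg (multilinExp_injective.ne hq))
      (fun h => (h (mem_univ _)).elim), if_pos rfl]
  · have hF : coeff m F = 0 := by
      by_contra hc
      exact hm (exists_multilinExp_eq (hF m (mem_support_iff.mpr hc)))
    simp only [hF]
    exact Finset.sum_eq_zero fun q _ => if_neg fun h => hm ⟨q, h⟩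

lemma eq_zero_of_coeff_multilinExp_eq_zero {F : MvPolynomial (Fin r × Fin 2) ℂ}
    (hF : F ∈ mSpace r 1) (h : ∀ q, coeff (multilinExp q) F = 0) : F = 0 := by
  rw [← sum_coeff_multilinExp_smul hF]
  simp [h]

lemma eval_pderiv_monomial_multilinExp (a : Fin r × Fin 2 → ℂ) (q : Fin r → Fin 2)
    (i : Fin r) (j : Fin 2) :
    eval a (pderiv (i, j) (monomial (multilinExp q) 1)) =
      if q i = j then ∏ k ∈ univ.erase i, a (k, q k) else 0 := by
  rw [pderiv_monomial, multilinExp_apply]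
  split_ifs with hq
  · subst hq
    have hsplit : multilinExp q =
        Finsupp.single (i, q i) 1 + ∑ k ∈ univ.erase i, Finsupp.single (k, q k) 1 :=
      (Finset.add_sum_erase _ _ (mem_univ i)).symm
    rw [hsplit, add_tsub_cancel_left, Nat.cast_one, mul_one, monomial_sum_one, eval_prod]
    exact Finset.prod_congr rfl fun k _ => eval_X _
  · simp

lemma eval_pderiv_of_mem_mSpace {F : MvPolynomial (Fin r × Fin 2) ℂ} (hF : F ∈ mSpace r 1)
    (a : Fin r × Fin 2 → ℂ) (i : Fin r) (j : Fin 2) :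
    eval a (pderiv (i, j) F) =
      ∑ q, if q i = j then coeff (multilinExp q) F * ∏ k ∈ univ.erase i, a (k, q k) else 0 := by
  conv_lhs => rw [← sum_coeff_multilinExp_smul hF]
  simp only [map_sum, Derivation.map_smul, smul_eval, eval_pderiv_monomial_multilinExp, mul_ite,
    mul_zero]

lemma eval_pderiv_of_mem_mSpace_of_eq_ite {F : MvPolynomial (Fin r × Fin 2) ℂ}
    (hF : F ∈ mSpace r 1) {a : Fin r × Fin 2 → ℂ} {b : Fin 2}
    (ha : ∀ v, a v = if v.2 = b then 1 else 0) (i : Fin r) (j : Fin 2) :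
    eval a (pderiv (i, j) F) = coeff (multilinExp (Function.update (fun _ => b) i j)) F := by
  rw [eval_pderiv_of_mem_mSpace hF, Finset.sum_eq_single (Function.update (fun _ => b) i j)]
  · rw [if_pos (Function.update_self _ _ _), Finset.prod_eq_one, mul_one]
    intro k hk
    simp [ha, Function.update_of_ne (ne_of_mem_erase hk)]
  · intro q _ hq
    split_ifs with hqi
    · obtain ⟨k, hk⟩ := Function.ne_iff.mp hq
      have hki : k ≠ i := by
        rintro rfl
        simp [hqi] at hk
      refine mul_eq_zero_of_right _ (Finset.prod_eq_zero (mem_erase.mpr ⟨hki, mem_univ k⟩) ?_)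
      simpa [ha, Function.update_of_ne hki] using hk
    · rfl
  · simp

lemma eval_one_pderiv_of_mem_mSpace {F : MvPolynomial (Fin r × Fin 2) ℂ} (hF : F ∈ mSpace r 1)
    (i : Fin r) (j : Fin 2) :
    eval 1 (pderiv (i, j) F) = ∑ q, if q i = j then coeff (multilinExp q) F else 0 := by
  simp [eval_pderiv_of_mem_mSpace hF]

noncomputable def minor (i k : Fin r) : MvPolynomial (Fin r × Fin 2) ℂ :=
  X (i, 0) * X (k, 1) - X (i, 1) * X (k, 0)

lemma eval_minor_eq_zero {i k : Fin r} {p : Fin r × Fin 2 → ℂ}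
    (h : ∀ l, p (i, l) = p (k, l)) : eval p (minor i k) = 0 := by
  simp [minor, h, mul_comm]

end Multilinear

lemma Fintype.sum_fin_four_arrow {M α : Type*} [AddCommMonoid M] [Fintype α]
    (f : (Fin 4 → α) → M) : ∑ q, f q = ∑ a, ∑ b, ∑ c, ∑ d, f ![a, b, c, d] := by
  simp only [← (Fin.consEquiv fun _ => α).sum_comp, Fintype.sum_prod_type, Fintype.sum_unique]
  rfl

lemma eq_zero_of_slice_sums_eq_zero (d : (Fin 4 → Fin 2) → ℂ)
    (h₀ : ∀ i j, d (Function.update 0 i j) = 0) (h₁ : ∀ i j, d (Function.update 1 i j) = 0)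
    (hsum : ∀ i j, ∑ q, (if q i = j then d q else 0) = 0)
    (h₁₀₁₀ : d ![1, 0, 1, 0] = 0) (h₁₁₀₀ : d ![1, 1, 0, 0] = 0) (q : Fin 4 → Fin 2) :
    d q = 0 := by
  have hz : ∀ q, (∃ i j, q = Function.update (0 : Fin 4 → Fin 2) i j ∨
      q = Function.update (1 : Fin 4 → Fin 2) i j) → d q = 0 := by
    rintro q ⟨i, j, rfl | rfl⟩
    exacts [h₀ i j, h₁ i j]
  have e₀₀ := hsum 0 0
  have e₀₁ := hsum 0 1
  have e₁₁ := hsum 1 1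
  have e₂₁ := hsum 2 1
  -- `hz` kills all but the six coefficients with two ones; `decide` recognises the others.
  simp (disch := decide) only [Fintype.sum_fin_four_arrow, Fin.sum_univ_two, hz, h₁₀₁₀, h₁₁₀₀,
    Matrix.cons_val_zero, Matrix.cons_val_one, Matrix.cons_val_two, Matrix.head_cons,
    Matrix.tail_cons, one_ne_zero, zero_ne_one, ite_true, ite_false, add_zero, zero_add]
    at e₀₀ e₀₁ e₁₁ e₂₁
  have h₀₀₁₁ : d ![0, 0, 1, 1] = 0 := by linear_combination e₀₀ - e₁₁
  have h₀₁₁₀ : d ![0, 1, 1, 0] = 0 := by linear_combination e₂₁ - e₀₀ + e₁₁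
  have h₀₁₀₁ : d ![0, 1, 0, 1] = 0 := by linear_combination e₀₀ - e₂₁
  obtain ⟨a, b, c, e, rfl⟩ : ∃ a b c e, q = ![a, b, c, e] :=
    ⟨q 0, q 1, q 2, q 3, by ext i; fin_cases i <;> rfl⟩
  fin_cases a <;> fin_cases b <;> fin_cases c <;> fin_cases e
  all_goals first
    | assumption
    | exact hz _ (by decide)

lemma P_apply_fst_eq (k : Fin 3) (i i' : Fin 4) (l : Fin 2) : P k (i, l) = P k (i', l) := by
  fin_cases k <;> rfl

lemma F₁_eq_minor_mul : F₁ = minor 0 1 * minor 2 3 := rfl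

lemma F₂_eq_minor_mul : F₂ = minor 0 2 * minor 1 3 := rfl

lemma singular_F₁ (k : Fin 3) : Singular F₁ (P k) := by
  rw [F₁_eq_minor_mul]
  exact singular_mul (eval_minor_eq_zero fun _ => P_apply_fst_eq ..)
    (eval_minor_eq_zero fun _ => P_apply_fst_eq ..)

lemma singular_F₂ (k : Fin 3) : Singular F₂ (P k) := by
  rw [F₂_eq_minor_mul]
  exact singular_mul (eval_minor_eq_zero fun _ => P_apply_fst_eq ..)
    (eval_minor_eq_zero fun _ => P_apply_fst_eq ..)

lemma F₁_eq_sum_monomial : F₁ =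
    monomial (multilinExp ![0, 1, 0, 1]) 1 - monomial (multilinExp ![0, 1, 1, 0]) 1
      - monomial (multilinExp ![1, 0, 0, 1]) 1 + monomial (multilinExp ![1, 0, 1, 0]) 1 := by
  simp only [monomial_multilinExp, Fin.prod_univ_four]
  simp [F₁]
  ring

lemma F₂_eq_sum_monomial : F₂ =
    monomial (multilinExp ![0, 0, 1, 1]) 1 - monomial (multilinExp ![0, 1, 1, 0]) 1
      - monomial (multilinExp ![1, 0, 0, 1]) 1 + monomial (multilinExp ![1, 1, 0, 0]) 1 := by
  simp only [monomial_multilinExp, Fin.prod_univ_four]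
  simp [F₂]
  ring

lemma F₁_mem_mSpace : F₁ ∈ mSpace 4 1 := by
  rw [F₁_eq_sum_monomial]
  exact add_mem (sub_mem (sub_mem (monomial_multilinExp_mem_mSpace _)
    (monomial_multilinExp_mem_mSpace _)) (monomial_multilinExp_mem_mSpace _))
    (monomial_multilinExp_mem_mSpace _)

lemma F₂_mem_mSpace : F₂ ∈ mSpace 4 1 := by
  rw [F₂_eq_sum_monomial]
  exact add_mem (sub_mem (sub_mem (monomial_multilinExp_mem_mSpace _)
    (monomial_multilinExp_mem_mSpace _)) (monomial_multilinExp_mem_mSpace _))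
    (monomial_multilinExp_mem_mSpace _)

lemma coeff_F₁ :
    coeff (multilinExp ![1, 0, 1, 0]) F₁ = 1 ∧ coeff (multilinExp ![1, 1, 0, 0]) F₁ = 0 := by
  simp [F₁_eq_sum_monomial, coeff_monomial, multilinExp_injective.eq_iff]

lemma coeff_F₂ :
    coeff (multilinExp ![1, 0, 1, 0]) F₂ = 0 ∧ coeff (multilinExp ![1, 1, 0, 0]) F₂ = 1 := by
  simp [F₂_eq_sum_monomial, coeff_monomial, multilinExp_injective.eq_iff]

noncomputable def singularForms : Submodule ℂ (MvPolynomial (Fin 4 × Fin 2) ℂ) :=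
  mSpace 4 1 ⊓ ⨅ k, singularSubmodule (P k)

lemma mem_singularForms {F : MvPolynomial (Fin 4 × Fin 2) ℂ} :
    F ∈ singularForms ↔ F ∈ mSpace 4 1 ∧ ∀ k, Singular F (P k) := by
  simp [singularForms, Submodule.mem_iInf]

lemma eq_zero_of_mem_singularForms {G : MvPolynomial (Fin 4 × Fin 2) ℂ}
    (hG : G ∈ singularForms)
    (h₁₀₁₀ : coeff (multilinExp ![1, 0, 1, 0]) G = 0)
    (h₁₁₀₀ : coeff (multilinExp ![1, 1, 0, 0]) G = 0) : G = 0 := by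
  obtain ⟨hG, hsing⟩ := mem_singularForms.mp hG
  refine eq_zero_of_coeff_multilinExp_eq_zero hG
    (eq_zero_of_slice_sums_eq_zero _ (fun i j => ?_) (fun i j => ?_) (fun i j => ?_) h₁₀₁₀ h₁₁₀₀)
  · exact (eval_pderiv_of_mem_mSpace_of_eq_ite hG (a := P 0) (fun _ => rfl) i j).symm.trans
      ((hsing 0).2 _)
  · have hP : ∀ v, P 1 v = if v.2 = 1 then 1 else 0 := by
      rintro ⟨i, l⟩
      fin_cases l <;> rfl
    exact (eval_pderiv_of_mem_mSpace_of_eq_ite hG hP i j).symm.trans ((hsing 1).2 _)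
  · rw [← eval_one_pderiv_of_mem_mSpace hG]
    exact (hsing 2).2 _

lemma span_le_singularForms : Submodule.span ℂ {F₁, F₂} ≤ singularForms := by
  rw [Submodule.span_le, Set.insert_subset_iff, Set.singleton_subset_iff]
  exact ⟨mem_singularForms.mpr ⟨F₁_mem_mSpace, singular_F₁⟩,
    mem_singularForms.mpr ⟨F₂_mem_mSpace, singular_F₂⟩⟩

lemma singularForms_le_span : singularForms ≤ Submodule.span ℂ {F₁, F₂} := by
  intro F hF
  set a := coeff (multilinExp ![1, 0, 1, 0]) F
  set b := coeff (multilinExp ![1, 1, 0, 0]) F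
  have hF₁ : F₁ ∈ singularForms := span_le_singularForms (Submodule.subset_span (by simp))
  have hF₂ : F₂ ∈ singularForms := span_le_singularForms (Submodule.subset_span (by simp))
  have hzero : F - (a • F₁ + b • F₂) = 0 :=
    eq_zero_of_mem_singularForms
      (sub_mem hF (add_mem (Submodule.smul_mem _ a hF₁) (Submodule.smul_mem _ b hF₂)))
      (by simp [coeff_F₁, coeff_F₂, a]) (by simp [coeff_F₁, coeff_F₂, b])
  exact Submodule.mem_span_pair.mpr ⟨a, b, (sub_eq_zero.mp hzero).symm⟩

lemma finrank_span_F₁_F₂ :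
    Module.finrank ℂ (Submodule.span ℂ ({F₁, F₂} : Set (MvPolynomial (Fin 4 × Fin 2) ℂ))) = 2 := by
  have hli : LinearIndependent ℂ ![F₁, F₂] := by
    rw [LinearIndependent.pair_iff]
    intro s t hst
    have h₁ := congrArg (coeff (multilinExp ![1, 0, 1, 0])) hst
    have h₂ := congrArg (coeff (multilinExp ![1, 1, 0, 0])) hst
    simp [coeff_F₁, coeff_F₂] at h₁ h₂
    exact ⟨h₁, h₂⟩
  rw [← Matrix.range_cons_cons_empty F₁ F₂ ![], finrank_span_eq_card hli, Fintype.card_fin]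

/-- the multidegree `(1,1,1,1)` forms on `(ℙ¹)⁴` singular at the three
points `p₁, p₂, p₃` are exactly the `2`-dimensional space spanned by
`(x₀y₁-x₁y₀)(z₀w₁-z₁w₀)` and `(x₀z₁-x₁z₀)(y₀w₁-y₁w₀)`. -/
theorem singular_forms_eq_span :
    {F | F ∈ mSpace 4 ![1, 1, 1, 1] ∧ ∀ k, Singular F (P k)} =
      (Submodule.span ℂ {F₁, F₂} : Set (MvPolynomial (Fin 4 × Fin 2) ℂ)) ∧
    Module.finrank ℂ (Submodule.span ℂ ({F₁, F₂} : Set (MvPolynomial (Fin 4 × Fin 2) ℂ))) = 2 := by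
  refine ⟨?_, finrank_span_F₁_F₂⟩
  have h : (![1, 1, 1, 1] : Fin 4 → ℕ) = 1 := by ext i; fin_cases i <;> rfl
  rw [h, ← le_antisymm singularForms_le_span span_le_singularForms]
  ext F
  exact mem_singularForms.symm
end
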